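/- (Half-space separation) Let A be a convex subset of a median algebra M and b ∈ M \ A. Then there exists a maximal convex set H with A ⊆ H and b ∉ H, and any such maximal H is a half space, i.e., M \ H is also convex. -/

import Mathlib

/-!
Zorn's lemma applies because the union of a chain of convex sets is convex. If `H` is maximal
and `u ∉ H`, the join `⋃_{h ∈ H} [u, h]` is convex (a point `t` between `[u, g]` and `[u, h]`
lies in `[u, ⟨g, h, t⟩]`, and `⟨g, h, t⟩ ∈ [g, h] ⊆ H`) and strictly contains `H`, so it
contains `b`: `b ∈ [u, p]` for some `p ∈ H`. Given `x, y ∉ H` and `z ∈ [x, y] ∩ H`, take such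
`p, q` for `x` and `y`. The median `r = ⟨b, p, q⟩` lies in `[p, q] ⊆ H`, and `b` lies in
`[x, r]` and in `[y, r]`. Since `{w | b ∈ [w, r]}` is convex, `b ∈ [z, r] ⊆ H`, a contradiction.
-/

/-- A median algebra: a set with a ternary median operation satisfying (Med 1)-(Med 3). -/
structure MedianAlgebra (M : Type*) where
  m : M → M → M → M
  comm₁ : ∀ x y z, m x y z = m x z y
  comm₂ : ∀ x y z, m x y z = m y z x
  idem : ∀ x y, m x x y = x
  assoc : ∀ x y z u v, m (m x y z) u v = m x (m y u v) (m z u v)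

namespace MedianAlgebra

variable {M : Type*}

/-- The interval `[x,y] = {z | z = m x y z}`. -/
def I (A : MedianAlgebra M) (x y : M) : Set M := {z | z = A.m x y z}

/-- A subset is convex if it contains the interval between any two of its points. -/
def Conv (A : MedianAlgebra M) (C : Set M) : Prop :=
  ∀ x ∈ C, ∀ y ∈ C, A.I x y ⊆ C

/-- A half space is a convex set with convex complement. -/
def Halfspace (A : MedianAlgebra M) (H : Set M) : Prop :=
  A.Conv H ∧ A.Conv Hᶜ

/-- The convex hull of a set: the intersection of all convex sets containing it. -/
def hull (A : MedianAlgebra M) (X : Set M) : Set M :=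
  ⋂₀ {C | A.Conv C ∧ X ⊆ C}

/-- The separator `Δ(X,Y)`: half spaces containing `X` and disjoint from `Y`. -/
def sep (A : MedianAlgebra M) (X Y : Set M) : Set (Set M) :=
  {H | A.Halfspace H ∧ X ⊆ H ∧ Y ⊆ Hᶜ}

end MedianAlgebra

namespace MedianAlgebra

variable {M : Type*} (A : MedianAlgebra M)

-- Together with `comm₁`, this lets `simp only` sort the arguments of every median, so it
-- decides equality up to the symmetries of `m`.
theorem m_comm_left (x y z : M) : A.m x y z = A.m y x z := by
  rw [A.comm₂, A.comm₁]

theorem left_mem_I (x y : M) : x ∈ A.I x y := by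
  show x = A.m x y x
  rw [A.comm₁, A.idem]

theorem right_mem_I (x y : M) : y ∈ A.I x y := by
  show y = A.m x y y
  rw [A.comm₂, A.idem]

theorem median_mem_I (x y z : M) : A.m x y z ∈ A.I x y := by
  show _ = A.m x y (A.m x y z)
  symm
  calc A.m x y (A.m x y z) = A.m (A.m z x y) x y := by simp only [A.comm₁, A.m_comm_left]
    _ = A.m z (A.m x x y) (A.m y x y) := A.assoc ..
    _ = A.m x y z := by rw [A.idem, A.comm₁ y, A.idem, A.comm₂]

variable {A}

theorem mem_I_of_mem_I_of_mem_I {v q b w : M} (hb : b ∈ A.I v q) (hw : w ∈ A.I b q) :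
    b ∈ A.I v w := by
  change b = A.m v q b at hb
  change w = A.m b q w at hw
  calc b = A.m (A.m v w v) b q := by rw [A.comm₁ v, A.idem, A.comm₁, ← hb]
    _ = A.m v (A.m w b q) (A.m v b q) := A.assoc ..
    _ = A.m v (A.m b q w) (A.m v q b) := by simp only [A.comm₁, A.m_comm_left]
    _ = A.m v w b := by rw [← hw, ← hb]

theorem mem_I_median_of_mem_I {u g h a c t : M} (ha : a ∈ A.I u g) (hc : c ∈ A.I u h)
    (ht : t ∈ A.I a c) : t ∈ A.I u (A.m g h t) := by
  change a = A.m u g a at ha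
  change c = A.m u h c at hc
  change t = A.m a c t at ht
  have hg : A.m g (A.m u c t) t = t :=
    calc A.m g (A.m u c t) t = A.m g (A.m u c t) (A.m a c t) := by rw [← ht]
      _ = A.m (A.m g u a) c t := (A.assoc ..).symm
      _ = A.m (A.m u g a) c t := by rw [A.m_comm_left g]
      _ = t := by rw [← ha, ← ht]
  have hh : A.m (A.m h u t) u (A.m c u t) = A.m c u t :=
    calc A.m (A.m h u t) u (A.m c u t) = A.m u (A.m h u t) (A.m c u t) := A.m_comm_left ..
      _ = A.m (A.m u h c) u t := (A.assoc ..).symm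
      _ = A.m c u t := by rw [← hc]
  show t = _
  symm
  calc A.m u (A.m g h t) t = A.m (A.m t g h) u t := by simp only [A.comm₁, A.m_comm_left]
    _ = A.m t (A.m g u t) (A.m h u t) := A.assoc ..
    _ = A.m (A.m g (A.m u c t) t) (A.m g u t) (A.m h u t) := by rw [hg]
    _ = A.m (A.m h u t) (A.m u g t) (A.m (A.m c u t) g t) := by
        simp only [A.comm₁, A.m_comm_left]
    _ = A.m (A.m (A.m h u t) u (A.m c u t)) g t := (A.assoc ..).symm
    _ = A.m g (A.m u c t) t := by rw [hh]; simp only [A.comm₁, A.m_comm_left]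
    _ = t := hg

theorem conv_setOf_mem_I (b r : M) : A.Conv {w | b ∈ A.I w r} := by
  intro u (hu : b = A.m u r b) v (hv : b = A.m v r b) z (hz : z = A.m u v z)
  show b = A.m z r b
  have hzu : A.m z r b = A.m u b (A.m z r b) :=
    calc A.m z r b = A.m (A.m u v z) r b := by rw [← hz]
      _ = A.m u (A.m v r b) (A.m z r b) := A.assoc ..
      _ = A.m u b (A.m z r b) := by rw [← hv]
  calc b = A.m b (A.m z u b) (A.m r u b) := by rw [A.m_comm_left r, ← hu, A.comm₁, A.idem]
    _ = A.m (A.m b z r) u b := (A.assoc ..).symm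
    _ = A.m u b (A.m z r b) := by simp only [A.comm₁, A.m_comm_left]
    _ = A.m z r b := hzu.symm

variable (A)

def join (u : M) (H : Set M) : Set M := {w | ∃ h ∈ H, w ∈ A.I u h}

theorem subset_join (u : M) (H : Set M) : H ⊆ A.join u H :=
  fun h hh => ⟨h, hh, A.right_mem_I u h⟩

theorem mem_join_self {u : M} {H : Set M} (hH : H.Nonempty) : u ∈ A.join u H :=
  let ⟨h, hh⟩ := hH
  ⟨h, hh, A.left_mem_I u h⟩

variable {A}

theorem Conv.join {H : Set M} (hH : A.Conv H) (u : M) : A.Conv (A.join u H) := by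
  rintro a ⟨g, hg, ha⟩ c ⟨h, hh, hc⟩ t ht
  exact ⟨A.m g h t, hH g hg h hh (A.median_mem_I g h t), mem_I_median_of_mem_I ha hc ht⟩

theorem conv_sUnion_of_isChain {c : Set (Set M)} (hc : ∀ K ∈ c, A.Conv K)
    (hchain : IsChain (· ⊆ ·) c) : A.Conv (⋃₀ c) := by
  rintro x ⟨K, hK, hxK⟩ y ⟨L, hL, hyL⟩
  obtain ⟨N, hN, hKN, hLN⟩ := hchain.directedOn K hK L hL
  exact (hc N hN x (hKN hxK) y (hLN hyL)).trans (Set.subset_sUnion_of_mem hN)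

theorem exists_maximal_conv_not_mem {C : Set M} (hC : A.Conv C) {b : M} (hb : b ∉ C) :
    ∃ H, C ⊆ H ∧ Maximal (fun K => A.Conv K ∧ b ∉ K) H := by
  refine zorn_subset_nonempty {K | A.Conv K ∧ b ∉ K}
    (fun c hcS hchain _ => ⟨⋃₀ c, ⟨?_, ?_⟩, ?_⟩) C ⟨hC, hb⟩
  · exact conv_sUnion_of_isChain (fun K hK => (hcS hK).1) hchain
  · rintro ⟨K, hK, hbK⟩
    exact (hcS hK).2 hbK
  · exact fun K hK => Set.subset_sUnion_of_mem hK

theorem exists_mem_I_of_maximal {H : Set M} {b : M}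
    (hmax : Maximal (fun K => A.Conv K ∧ b ∉ K) H) (hne : H.Nonempty) {u : M} (hu : u ∉ H) :
    ∃ p ∈ H, b ∈ A.I u p := by
  by_contra! hb
  have hjoin : A.Conv (A.join u H) ∧ b ∉ A.join u H :=
    ⟨hmax.prop.1.join u, fun ⟨p, hp, hbp⟩ => hb p hp hbp⟩
  exact hu (hmax.eq_of_subset hjoin (A.subset_join u H) ▸ A.mem_join_self hne)

theorem conv_compl_of_maximal {H : Set M} {b : M}
    (hmax : Maximal (fun K => A.Conv K ∧ b ∉ K) H) : A.Conv Hᶜ := by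
  have ⟨hH, hbH⟩ := hmax.prop
  intro x hx y hy z hz hzH
  obtain ⟨p, hp, hxp⟩ := exists_mem_I_of_maximal hmax ⟨z, hzH⟩ hx
  obtain ⟨q, hq, hyq⟩ := exists_mem_I_of_maximal hmax ⟨z, hzH⟩ hy
  have hr : A.m b p q ∈ H := hH p hp q hq (A.comm₂ b p q ▸ A.median_mem_I p q b)
  have hxr : b ∈ A.I x (A.m b p q) := mem_I_of_mem_I_of_mem_I hxp (A.median_mem_I b p q)
  have hyr : b ∈ A.I y (A.m b p q) :=
    mem_I_of_mem_I_of_mem_I hyq (A.comm₁ b q p ▸ A.median_mem_I b q p)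
  exact hbH (hH z hzH _ hr (conv_setOf_mem_I b _ x hxr y hyr hz))

end MedianAlgebra

/-- Half-space separation: a maximal convex set containing `C` and avoiding `b` exists,
and every such maximal set is a half space. -/
theorem exists_maximal_convex_and_maximal_is_halfspace {M : Type*} (A : MedianAlgebra M)
    (C : Set M) (hC : A.Conv C) (b : M) (hb : b ∉ C) :
    (∃ H : Set M, A.Conv H ∧ C ⊆ H ∧ b ∉ H ∧
      ∀ H' : Set M, A.Conv H' → C ⊆ H' → b ∉ H' → H ⊆ H' → H = H') ∧
    (∀ H : Set M, A.Conv H → C ⊆ H → b ∉ H →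
      (∀ H' : Set M, A.Conv H' → C ⊆ H' → b ∉ H' → H ⊆ H' → H = H') →
      A.Conv Hᶜ) := by
  refine ⟨?_, fun H hH hCH hbH hmax => ?_⟩
  · obtain ⟨H, hCH, hHmax⟩ := A.exists_maximal_conv_not_mem hC hb
    exact ⟨H, hHmax.prop.1, hCH, hHmax.prop.2,
      fun H' hH' _ hbH' hHH' => hHmax.eq_of_subset ⟨hH', hbH'⟩ hHH'⟩
  · refine MedianAlgebra.conv_compl_of_maximal ⟨⟨hH, hbH⟩, fun K hK hHK => ?_⟩
    exact (hmax K hK.1 (hCH.trans hHK) hK.2 hHK).ge
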